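/- arXiv:2007.13587 — 2 statements merged into one kernel-verified Lean document; each statement's English description precedes it below -/
import Mathlib

section
/- Under the hypotheses det M > 0, tr M < 0, M₁₁ > 0, d_b d_c > 0 and (M₁₁ d_c + M₂₂ d_b)² > 4 d_b d_c det M, the set of X = ξ² ≥ 0 for which det(M - ξ² diag(d_b,d_c)) < 0 is exactly the open interval (Λ₋, Λ₊), where Λ_± = [(M₁₁ d_c + M₂₂ d_b) ± √((M₁₁ d_c + M₂₂ d_b)² - 4 d_b d_c det M)]/(2 d_b d_c), and 0 < Λ₋ < Λ₊ < ∞. -/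
theorem instability_interval (M : Matrix (Fin 2) (Fin 2) ℝ)
    (hdet : 0 < M.det) (htr : M.trace < 0) (hM11 : 0 < M 0 0)
    (d_b d_c : ℝ) (hdbdc : 0 < d_b * d_c)
    (hS : 0 < M 0 0 * d_c + M 1 1 * d_b)
    (hdisc : 4 * (d_b * d_c) * M.det < (M 0 0 * d_c + M 1 1 * d_b) ^ 2)
    (Λm Λp : ℝ)
    (hΛm : Λm = ((M 0 0 * d_c + M 1 1 * d_b) -
      Real.sqrt ((M 0 0 * d_c + M 1 1 * d_b) ^ 2 - 4 * (d_b * d_c) * M.det))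
        / (2 * (d_b * d_c)))
    (hΛp : Λp = ((M 0 0 * d_c + M 1 1 * d_b) +
      Real.sqrt ((M 0 0 * d_c + M 1 1 * d_b) ^ 2 - 4 * (d_b * d_c) * M.det))
        / (2 * (d_b * d_c))) :
    (∀ X : ℝ, 0 ≤ X →
      (M.det - (M 0 0 * d_c + M 1 1 * d_b) * X + d_b * d_c * X ^ 2 < 0 ↔
        Λm < X ∧ X < Λp)) ∧ 0 < Λm ∧ Λm < Λp := by
  set a := d_b * d_c with ha
  set S := M 0 0 * d_c + M 1 1 * d_b with hSdef
  set D := S ^ 2 - 4 * a * M.det with hD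
  have hD0 : 0 < D := by simp only [hD]; nlinarith
  set s := Real.sqrt D with hs
  have hs2 : s ^ 2 = D := Real.sq_sqrt hD0.le
  have hs0 : 0 < s := Real.sqrt_pos.mpr hD0
  have hsS : s < S := by nlinarith [hs2, hs0]
  have ha2 : (0:ℝ) < 2 * a := by linarith
  have hΛm0 : 0 < Λm := by rw [hΛm]; exact div_pos (by linarith) ha2
  have hΛmp : Λm < Λp := by
    rw [hΛm, hΛp]; exact (div_lt_div_iff_of_pos_right ha2).mpr (by linarith)
  refine ⟨fun X hX => ?_, hΛm0, hΛmp⟩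
  have hfac : M.det - S * X + a * X ^ 2 = a * (X - Λm) * (X - Λp) := by
    rw [hΛm, hΛp]; field_simp; nlinarith [hs2]
  rw [hfac]
  constructor
  · intro h
    by_contra hc
    push_neg at hc
    rcases le_or_gt X Λm with h1 | h1
    · have p : 0 ≤ (Λm - X) * (Λp - X) := mul_nonneg (by linarith) (by linarith)
      nlinarith [mul_nonneg hdbdc.le p]
    · have h2 := hc h1
      have p : 0 ≤ (X - Λm) * (X - Λp) := mul_nonneg (by linarith) (by linarith)
      nlinarith [mul_nonneg hdbdc.le p]
  · rintro ⟨h1, h2⟩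
    have p : 0 < (X - Λm) * (Λp - X) := mul_pos (by linarith) (by linarith)
    have key : a * (X - Λm) * (X - Λp) = -(a * ((X - Λm) * (Λp - X))) := by ring
    rw [key]; linarith [mul_pos hdbdc p]
end

section
/- If condition (C): 0 < a κ β̄²/(s_b+β̄)² - r_b θ - f_e κ < r_c holds, then the Jacobian M at the positive equilibrium satisfies M₁₁ > 0, tr M < 0 and det M > 0; hence the equilibrium is linearly stable for the ODE but M₁₁ > 0 enables diffusion-driven (Turing) instability. -/
set_option maxHeartbeats 1000000 in
theorem turing_condition_implies (a r_b r_c f_b f_e b_i s_b κ β θ : ℝ)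
    (ha : 0 < a) (hrb : 0 < r_b) (hrc : 0 < r_c) (hfb : 0 < f_b)
    (hfe : 0 < f_e) (hbi : 0 < b_i) (hsb : 0 < s_b)
    (hκ : κ = f_b / r_c) (hβ : β ∈ Set.Ioo 0 b_i)
    (heq : (r_b + f_e * κ) * (1 - β / b_i) = a * κ * β / (s_b + β))
    (hθ : θ = β / b_i)
    (hC1 : 0 < a * κ * β ^ 2 / (s_b + β) ^ 2 - r_b * θ - f_e * κ)
    (hC2 : a * κ * β ^ 2 / (s_b + β) ^ 2 - r_b * θ - f_e * κ < r_c)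
    (M : Matrix (Fin 2) (Fin 2) ℝ)
    (hM : M = !![r_b * (1 - 2 * θ) - a * s_b * κ * β / (s_b + β) ^ 2 - f_e * κ * θ,
                 -(a * β) / (s_b + β) + f_e * (1 - θ);
                 f_b, -r_c]) :
    0 < M 0 0 ∧ M.trace < 0 ∧ 0 < M.det := by
  obtain ⟨hβ0, hβb⟩ := hβ
  have hs : 0 < s_b + β := by linarith
  have hsne : (s_b + β) ≠ 0 := ne_of_gt hs
  have hθ0 : 0 < θ := by rw [hθ]; positivity
  have hθ1 : θ < 1 := by rw [hθ]; rw [div_lt_one hbi]; exact hβb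
  have hκ0 : 0 < κ := by rw [hκ]; positivity
  have hκne : κ ≠ 0 := ne_of_gt hκ0
  have h1 : (r_b + f_e * κ) * (1 - θ) = a * κ * β / (s_b + β) := by
    rw [hθ]; exact heq
  -- M 0 0 equals the condition quantity
  have hM00 : M 0 0 = a * κ * β ^ 2 / (s_b + β) ^ 2 - r_b * θ - f_e * κ := by
    rw [hM]
    show r_b * (1 - 2 * θ) - a * s_b * κ * β / (s_b + β) ^ 2 - f_e * κ * θ = _
    have hsimp : a * s_b * κ * β / (s_b + β) ^ 2 + a * κ * β ^ 2 / (s_b + β) ^ 2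
        = a * κ * β / (s_b + β) := by field_simp
    linear_combination h1 - hsimp
  have hM12 : M 0 1 = -(r_b * (1 - θ)) / κ := by
    rw [hM]
    show -(a * β) / (s_b + β) + f_e * (1 - θ) = _
    rw [eq_div_iff hκne]
    have hsimp : (a * β / (s_b + β)) * κ = a * κ * β / (s_b + β) := by
      field_simp
    linear_combination h1 - hsimp
  have hM10 : M 1 0 = f_b := by rw [hM]; rfl
  have hM11 : M 1 1 = -r_c := by rw [hM]; rfl
  have hfb' : f_b = κ * r_c := by rw [hκ]; field_simp
  have hE : a * κ * β ^ 2 / (s_b + β) ^ 2 - r_b * θ - f_e * κ < r_b * (1 - θ) := by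
    have h3 : β / (s_b + β) < 1 := by rw [div_lt_one hs]; linarith
    have h4 : 0 < a * κ * β / (s_b + β) := by positivity
    have h5 : (a * κ * β / (s_b + β)) * (β / (s_b + β)) < (a * κ * β / (s_b + β)) * 1 :=
      mul_lt_mul_of_pos_left h3 h4
    have h2 : a * κ * β ^ 2 / (s_b + β) ^ 2
        = (a * κ * β / (s_b + β)) * (β / (s_b + β)) := by field_simp
    rw [h2]
    nlinarith [h5, h1, mul_pos hrb hθ0, mul_pos (mul_pos hfe hκ0) hθ0]
  refine ⟨by rw [hM00]; exact hC1, ?_, ?_⟩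
  · rw [Matrix.trace_fin_two, hM00, hM11]
    linarith
  · have hdet : M.det = r_c * (r_b * (1 - θ)
        - (a * κ * β ^ 2 / (s_b + β) ^ 2 - r_b * θ - f_e * κ)) := by
      rw [Matrix.det_fin_two, hM00, hM11, hM10, hM12, hfb']
      field_simp
      ring
    rw [hdet]
    exact mul_pos hrc (by linarith)
end
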